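/- Let F be a connected GSC with no cut points. If there exist n ∈ ℤ⁺ and disjoint subsets I, J ⊆ D^n such that (⋃_{𝐢∈I} φ_𝐢(F)) ∩ (⋃_{𝐢∈J} φ_𝐢(F)) = {x} is a singleton and I ∪ J = Ω_n(x), then x is a local cut point of F. -/

import Mathlib

open Set Topology

noncomputable def phi (N : ℕ) (i : ℕ × ℕ) (p : ℝ × ℝ) : ℝ × ℝ :=
  ((p.1 + (i.1 : ℝ)) / (N : ℝ), (p.2 + (i.2 : ℝ)) / (N : ℝ))

noncomputable def phiW (N : ℕ) (l : List (ℕ × ℕ)) : ℝ × ℝ → ℝ × ℝ :=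
  l.foldr (fun i g => phi N i ∘ g) id

def Words (D : Finset (ℕ × ℕ)) (k : ℕ) : Set (List (ℕ × ℕ)) :=
  {l | l.length = k ∧ ∀ a ∈ l, a ∈ D}

def GoodDigits (N : ℕ) (D : Finset (ℕ × ℕ)) : Prop :=
  2 ≤ N ∧ (∀ i ∈ D, i.1 < N ∧ i.2 < N) ∧ 1 < D.card ∧ D.card < N ^ 2

def IsAttractor (N : ℕ) (D : Finset (ℕ × ℕ)) (F : Set (ℝ × ℝ)) : Prop :=
  F.Nonempty ∧ IsCompact F ∧ F = ⋃ i ∈ D, phi N i '' F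

def OmegaW (N : ℕ) (D : Finset (ℕ × ℕ)) (F : Set (ℝ × ℝ)) (x : ℝ × ℝ) (k : ℕ) :
    Set (List (ℕ × ℕ)) :=
  {l | l ∈ Words D k ∧ x ∈ phiW N l '' F}

def Ek (N : ℕ) (D : Finset (ℕ × ℕ)) (F : Set (ℝ × ℝ)) (x : ℝ × ℝ) (k : ℕ) :
    Set (ℝ × ℝ) :=
  ⋃ l ∈ Words D k \ OmegaW N D F x k, phiW N l '' F

def IsRep (N : ℕ) (D : Finset (ℕ × ℕ)) (F : Set (ℝ × ℝ)) (x : ℝ × ℝ)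
    (ii : ℕ → ℕ × ℕ) : Prop :=
  (∀ k, ii k ∈ D) ∧ ∀ k : ℕ, x ∈ phiW N (List.ofFn fun j : Fin k => ii (j : ℕ)) '' F

def SepComp (E A B : Set (ℝ × ℝ)) : Prop :=
  A ⊆ E ∧ B ⊆ E ∧
    ∀ y ∈ A, ∀ z ∈ B, connectedComponentIn E y ≠ connectedComponentIn E z

def WellSep (N : ℕ) (D : Finset (ℕ × ℕ)) (F : Set (ℝ × ℝ)) (x : ℝ × ℝ) (n : ℕ)
    (ω τ : List (ℕ × ℕ)) : Prop :=
  ∀ p : ℕ, 1 ≤ p → SepComp (Ek N D F x (n + p)) (phiW N ω '' F) (phiW N τ '' F)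

lemma phi_cont (N : ℕ) (i : ℕ × ℕ) : Continuous (phi N i) := by
  unfold phi; fun_prop

lemma phiW_nil (N : ℕ) : phiW N [] = id := rfl

lemma phiW_cons (N : ℕ) (a : ℕ × ℕ) (l : List (ℕ × ℕ)) :
    phiW N (a :: l) = phi N a ∘ phiW N l := rfl

lemma phiW_cont (N : ℕ) (l : List (ℕ × ℕ)) : Continuous (phiW N l) := by
  induction l with
  | nil => exact continuous_id
  | cons a l ih => rw [phiW_cons]; exact (phi_cont N a).comp ih

lemma phi_inj (N : ℕ) (hN : (N:ℝ) ≠ 0) (i : ℕ × ℕ) : Function.Injective (phi N i) := by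
  intro p q h
  simp only [phi, Prod.mk.injEq] at h
  have h1 := (div_left_inj' hN).mp h.1
  have h2 := (div_left_inj' hN).mp h.2
  exact Prod.ext (by linarith) (by linarith)

lemma phiW_inj (N : ℕ) (hN : (N:ℝ) ≠ 0) (l : List (ℕ × ℕ)) :
    Function.Injective (phiW N l) := by
  induction l with
  | nil => exact fun a b h => h
  | cons a l ih => rw [phiW_cons]; exact (phi_inj N hN a).comp ih

lemma words_finite (D : Finset (ℕ × ℕ)) (k : ℕ) : (Words D k).Finite := by
  induction k with
  | zero =>
    refine Set.Finite.subset (Set.finite_singleton []) ?_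
    intro l hl
    simpa using List.length_eq_zero_iff.mp hl.1
  | succ k ih =>
    have : Words D (k+1) ⊆ (fun p : (ℕ × ℕ) × List (ℕ × ℕ) => p.1 :: p.2) ''
        ((D : Set (ℕ × ℕ)) ×ˢ Words D k) := by
      intro l hl
      obtain ⟨hlen, hmem⟩ := hl
      cases l with
      | nil => simp at hlen
      | cons a l' =>
        exact ⟨(a, l'), ⟨hmem a (by simp), by simpa using hlen,
          fun b hb => hmem b (by simp [hb])⟩, rfl⟩
    exact Set.Finite.subset (((D.finite_toSet).prod ih).image _) this

lemma phiW_sub (N : ℕ) (D : Finset (ℕ × ℕ)) (F : Set (ℝ × ℝ))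
    (hFeq : F = ⋃ i ∈ D, phi N i '' F) (l : List (ℕ × ℕ)) (hl : ∀ a ∈ l, a ∈ D) :
    phiW N l '' F ⊆ F := by
  induction l with
  | nil => simp [phiW_nil]
  | cons a l ih =>
    rw [phiW_cons, Set.image_comp]
    refine subset_trans (Set.image_mono (ih (fun b hb => hl b (by simp [hb])))) ?_
    intro y hy
    rw [hFeq]
    exact Set.mem_biUnion (hl a (by simp)) hy

lemma F_sub_union (N : ℕ) (D : Finset (ℕ × ℕ)) (F : Set (ℝ × ℝ))
    (hFeq : F = ⋃ i ∈ D, phi N i '' F) (k : ℕ) :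
    F ⊆ ⋃ l ∈ Words D k, phiW N l '' F := by
  induction k with
  | zero =>
    intro y hy
    exact Set.mem_biUnion (show ([] : List (ℕ × ℕ)) ∈ Words D 0 by
      constructor <;> simp) (by simpa [phiW_nil] using hy)
  | succ k ih =>
    intro y hy
    have h1 : y ∈ ⋃ i ∈ D, phi N i '' F := hFeq ▸ hy
    obtain ⟨a, ha, z, hz, hzy⟩ := Set.mem_iUnion₂.mp h1
    obtain ⟨l, hl, w, hw, hwz⟩ := Set.mem_iUnion₂.mp (ih hz)
    refine Set.mem_biUnion (show a :: l ∈ Words D (k+1) from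
      ⟨by simp [hl.1], fun b hb => ?_⟩) ⟨w, hw, ?_⟩
    · rcases List.mem_cons.mp hb with h | h
      · exact h ▸ ha
      · exact hl.2 b h
    · rw [phiW_cons]; simp [hwz, hzy]

lemma two_points (N : ℕ) (D : Finset (ℕ × ℕ)) (hND : GoodDigits N D)
    (F : Set (ℝ × ℝ)) (hF : IsAttractor N D F) :
    ∃ p ∈ F, ∃ q ∈ F, p ≠ q := by
  obtain ⟨a, ha, b, hb, hab⟩ := Finset.one_lt_card.mp hND.2.2.1
  obtain ⟨p0, hp0⟩ := hF.1
  have hN0 : (N : ℝ) ≠ 0 := by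
    have : 2 ≤ N := hND.1; positivity
  refine ⟨phi N a p0, ?_, phi N b p0, ?_, ?_⟩
  · rw [hF.2.2]; exact Set.mem_biUnion ha ⟨p0, hp0, rfl⟩
  · rw [hF.2.2]; exact Set.mem_biUnion hb ⟨p0, hp0, rfl⟩
  · intro h
    simp only [phi, Prod.mk.injEq] at h
    have h1 := (div_left_inj' hN0).mp h.1
    have h2 := (div_left_inj' hN0).mp h.2
    have e1 : (a.1 : ℝ) = b.1 := by linarith
    have e2 : (a.2 : ℝ) = b.2 := by linarith
    exact hab (Prod.ext (Nat.cast_injective e1) (Nat.cast_injective e2))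

theorem stmt13 (N : ℕ) (D : Finset (ℕ × ℕ)) (hND : GoodDigits N D)
    (F : Set (ℝ × ℝ)) (hF : IsAttractor N D F) (hFconn : IsConnected F)
    (hnocut : ∀ y ∈ F, IsPreconnected (F \ {y}))
    (n : ℕ) (hn : 1 ≤ n) (I J : Set (List (ℕ × ℕ)))
    (hI : I ⊆ Words D n) (hJ : J ⊆ Words D n) (hdisj : Disjoint I J)
    (x : ℝ × ℝ)
    (hsing : (⋃ l ∈ I, phiW N l '' F) ∩ (⋃ l ∈ J, phiW N l '' F) = {x})
    (hcover : I ∪ J = OmegaW N D F x n) :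
    x ∈ F ∧ ∃ U, U ⊆ F ∧ U ∈ nhdsWithin x F ∧ IsConnected U ∧
      ¬ IsPreconnected (U \ {x}) := by
  have hN0 : (N : ℝ) ≠ 0 := by
    have : 2 ≤ N := hND.1; positivity
  have hFeq := hF.2.2
  -- x belongs to both unions
  have hxmem : x ∈ (⋃ l ∈ I, phiW N l '' F) ∩ (⋃ l ∈ J, phiW N l '' F) := by
    rw [hsing]; rfl
  obtain ⟨lI, hlI, hxlI⟩ := Set.mem_iUnion₂.mp hxmem.1
  obtain ⟨lJ, hlJ, hxlJ⟩ := Set.mem_iUnion₂.mp hxmem.2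
  set A : Set (ℝ × ℝ) := ⋃ l ∈ I, phiW N l '' F with hA
  set B : Set (ℝ × ℝ) := ⋃ l ∈ J, phiW N l '' F with hB
  set U : Set (ℝ × ℝ) := A ∪ B with hU
  have hsubF : U ⊆ F := by
    rintro y (hy | hy) <;> obtain ⟨l, hl, hyl⟩ := Set.mem_iUnion₂.mp hy
    · exact phiW_sub N D F hFeq l (hI hl).2 hyl
    · exact phiW_sub N D F hFeq l (hJ hl).2 hyl
  have hxF : x ∈ F := hsubF (Or.inl (Set.mem_biUnion hlI hxlI))
  -- closedness of cell-unions
  have hclosed : ∀ S : Set (List (ℕ × ℕ)), S ⊆ Words D n →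
      IsClosed (⋃ l ∈ S, phiW N l '' F) := by
    intro S hS
    exact Set.Finite.isClosed_biUnion ((words_finite D n).subset hS)
      (fun l _ => (hF.2.1.image (phiW_cont N l)).isClosed)
  have hAclosed : IsClosed A := hclosed I hI
  have hBclosed : IsClosed B := hclosed J hJ
  refine ⟨hxF, U, hsubF, ?_, ?_, ?_⟩
  · -- neighborhood
    set C : Set (ℝ × ℝ) := ⋃ l ∈ Words D n \ OmegaW N D F x n, phiW N l '' F with hC
    have hCclosed : IsClosed C := hclosed _ Set.diff_subset
    have hxC : x ∉ C := by
      intro hx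
      obtain ⟨l, hl, hxl⟩ := Set.mem_iUnion₂.mp hx
      exact hl.2 ⟨hl.1, hxl⟩
    refine mem_nhdsWithin.mpr ⟨Cᶜ, hCclosed.isOpen_compl, hxC, ?_⟩
    rintro y ⟨hyC, hyF⟩
    obtain ⟨l, hl, hyl⟩ := Set.mem_iUnion₂.mp (F_sub_union N D F hFeq n hyF)
    have hlΩ : l ∈ OmegaW N D F x n := by
      by_contra hcon
      exact hyC (Set.mem_biUnion ⟨hl, hcon⟩ hyl)
    rw [← hcover] at hlΩ
    rcases hlΩ with h | h
    · exact Or.inl (Set.mem_biUnion h hyl)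
    · exact Or.inr (Set.mem_biUnion h hyl)
  · -- connectedness
    refine ⟨⟨x, Or.inl (Set.mem_biUnion hlI hxlI)⟩, ?_⟩
    have hUeq : U = ⋃₀ ((fun l => phiW N l '' F) '' (I ∪ J)) := by
      rw [Set.sUnion_image, hU, hA, hB, Set.biUnion_union]
    rw [hUeq]
    refine isPreconnected_sUnion x _ ?_ ?_
    · rintro s ⟨l, hl, rfl⟩
      have : l ∈ OmegaW N D F x n := hcover ▸ hl
      exact this.2
    · rintro s ⟨l, hl, rfl⟩
      exact hFconn.isPreconnected.image _ (phiW_cont N l).continuousOn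
  · -- not preconnected after removing x
    intro hpc
    obtain ⟨p, hp, q, hq, hpq⟩ := two_points N D hND F hF
    have key : ∀ l : List (ℕ × ℕ), ∃ w ∈ phiW N l '' F, w ≠ x := by
      intro l
      by_cases h : phiW N l p = x
      · exact ⟨phiW N l q, ⟨q, hq, rfl⟩, fun hc =>
          hpq (phiW_inj N hN0 l (h.trans hc.symm))⟩
      · exact ⟨phiW N l p, ⟨p, hp, rfl⟩, h⟩
    obtain ⟨wI, hwI, hwIx⟩ := key lI
    obtain ⟨wJ, hwJ, hwJx⟩ := key lJ
    have h1 : (U \ {x}) ⊆ A ∪ B := Set.diff_subset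
    have h2 : ((U \ {x}) ∩ A).Nonempty :=
      ⟨wI, ⟨Or.inl (Set.mem_biUnion hlI hwI), hwIx⟩, Set.mem_biUnion hlI hwI⟩
    have h3 : ((U \ {x}) ∩ B).Nonempty :=
      ⟨wJ, ⟨Or.inr (Set.mem_biUnion hlJ hwJ), hwJx⟩, Set.mem_biUnion hlJ hwJ⟩
    obtain ⟨z, hz, hzAB⟩ := (isPreconnected_closed_iff.mp hpc) A B hAclosed hBclosed h1 h2 h3
    have : z ∈ ({x} : Set (ℝ × ℝ)) := hsing ▸ hzAB
    exact hz.2 this
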